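/- arXiv:0903.1743 — 3 statements merged into one kernel-verified Lean document; each statement's English description precedes it below -/
import Mathlib

section
/- Let p_e(n) (resp. p_o(n)) denote the number of partitions of n into an even (resp. odd) number of distinct parts. Then p_e(n) - p_o(n) = (-1)^m if n = m(3m±1)/2 for some positive integer m, and p_e(n) - p_o(n) = 0 otherwise. -/
/-!
Expanding the finite product `∏ i ∈ T, (1 - X ^ i)` gives `∑ S ⊆ T, (-1) ^ |S| X ^ (∑ S)`, so
once `T` contains `1, …, n` the coefficient of `X ^ n` is `p_e(n) - p_o(n)`. By Euler's pentagonal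
number theorem (`PowerSeries.coeff_prod_one_sub_X_pow_eventually_eq`) this coefficient is the one of
`∑ k : ℤ, (-1) ^ k X ^ (k (3k - 1) / 2)`, and the pentagonal numbers with `k = m` and `k = -m` are
`m (3m - 1) / 2` and `m (3m + 1) / 2`.
-/

/-- The finite set of partitions of `n` into distinct (positive) parts,
encoded as finite sets of positive integers summing to `n`. -/
def distinctPartitions (n : ℕ) : Finset (Finset ℕ) :=
  (Finset.range (n + 1)).powerset.filter (fun S => 0 ∉ S ∧ S.sum id = n)

/-- Number of partitions of `n` into an even number of distinct parts. -/
def pe (n : ℕ) : ℕ := ((distinctPartitions n).filter (fun S => Even S.card)).card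

/-- Number of partitions of `n` into an odd number of distinct parts. -/
def po (n : ℕ) : ℕ := ((distinctPartitions n).filter (fun S => Odd S.card)).card

open Finset PowerSeries

theorem sum_neg_one_pow_card_distinctPartitions (n : ℕ) :
    ∑ S ∈ distinctPartitions n, (-1 : ℤ) ^ S.card = pe n - po n := by
  rw [← sum_filter_add_sum_filter_not _ (fun S => Even S.card), pe, po]
  simp_rw [Nat.not_even_iff_odd]
  have he : ∑ S ∈ distinctPartitions n with Even S.card, (-1 : ℤ) ^ S.card
      = ∑ S ∈ distinctPartitions n with Even S.card, 1 :=
    sum_congr rfl fun S hS => (mem_filter.1 hS).2.neg_one_pow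
  have ho : ∑ S ∈ distinctPartitions n with Odd S.card, (-1 : ℤ) ^ S.card
      = ∑ S ∈ distinctPartitions n with Odd S.card, -1 :=
    sum_congr rfl fun S hS => (mem_filter.1 hS).2.neg_one_pow
  simp [he, ho, sub_eq_add_neg]

theorem prod_one_sub_X_pow_eq_sum_powerset {R : Type*} [CommRing R] (T : Finset ℕ) :
    ∏ i ∈ T, (1 - X ^ i : R⟦X⟧) = ∑ S ∈ T.powerset, C ((-1) ^ S.card) * X ^ (S.sum id) := by
  simp_rw [sub_eq_add_neg, prod_one_add]
  refine sum_congr rfl fun S _ => ?_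
  rw [prod_neg, prod_pow_eq_pow_sum, map_pow, map_neg, map_one]
  rfl

theorem coeff_prod_one_sub_X_pow {R : Type*} [CommRing R] (T : Finset ℕ) (n : ℕ) :
    coeff n (∏ i ∈ T, (1 - X ^ i : R⟦X⟧)) = ∑ S ∈ T.powerset with S.sum id = n, (-1) ^ S.card := by
  simp only [prod_one_sub_X_pow_eq_sum_powerset, map_sum, coeff_C_mul_X_pow, sum_filter]
  simp [eq_comm]

theorem powerset_filter_sum_eq_distinctPartitions {T : Finset ℕ} {n : ℕ} (h0 : 0 ∉ T)
    (hT : Icc 1 n ⊆ T) : {S ∈ T.powerset | S.sum id = n} = distinctPartitions n := by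
  ext S
  have hle : S.sum id = n → ∀ i ∈ S, i ≤ n := fun h i hi =>
    h ▸ single_le_sum (f := id) (by simp) hi
  simp only [distinctPartitions, mem_filter, mem_powerset]
  constructor
  · rintro ⟨hST, hS⟩
    exact ⟨fun i hi => mem_range_succ_iff.2 (hle hS i hi), fun h => h0 (hST h), hS⟩
  · rintro ⟨-, hS0, hS⟩
    refine ⟨fun i hi => hT (mem_Icc.2 ⟨?_, hle hS i hi⟩), hS⟩
    exact Nat.pos_of_ne_zero (by rintro rfl; exact hS0 hi)

theorem coeff_pentagonalSeries_eq_pe_sub_po (n : ℕ) :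
    coeff n (pentagonalSeries ℤ) = pe n - po n := by
  obtain ⟨s, hs⟩ := Filter.eventually_atTop.1 (coeff_prod_one_sub_X_pow_eventually_eq ℤ n)
  have h0 : 0 ∉ (s ∪ range n).map (addRightEmbedding 1) := by simp
  have hIcc : Icc 1 n ⊆ (s ∪ range n).map (addRightEmbedding 1) := fun j hj => by
    simp only [mem_Icc] at hj
    simp only [mem_map, mem_union, mem_range, addRightEmbedding_apply]
    exact ⟨j - 1, Or.inr (by omega), by omega⟩
  have hprod : ∏ i ∈ s ∪ range n, (1 - X ^ (i + 1) : ℤ⟦X⟧)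
      = ∏ j ∈ (s ∪ range n).map (addRightEmbedding 1), (1 - X ^ j) := by
    rw [prod_map]; rfl
  rw [← hs (s ∪ range n) subset_union_left, hprod, coeff_prod_one_sub_X_pow,
    powerset_filter_sum_eq_distinctPartitions h0 hIcc, sum_neg_one_pow_card_distinctPartitions]

theorem pentagonal_natCast (m : ℕ) : pentagonal m = m * (3 * m - 1) / 2 := by
  zify [natCast_pentagonal]
  rcases m with _ | m
  · simp
  · push_cast [Nat.cast_sub (by omega : 1 ≤ 3 * (m + 1))]
    rfl

theorem pentagonal_neg_natCast (m : ℕ) : pentagonal (-m) = m * (3 * m + 1) / 2 := by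
  zify [natCast_pentagonal]
  ring_nf

/-- `p_e(n) - p_o(n) = (-1)^m` if `n = m(3m∓1)/2` for some `m ≥ 1`, and `0` otherwise. -/
theorem stmt_3 (n : ℕ) (hn : 1 ≤ n) :
    (∀ m : ℕ, 1 ≤ m → (n = m * (3 * m - 1) / 2 ∨ n = m * (3 * m + 1) / 2) →
      (pe n : ℤ) - po n = (-1) ^ m) ∧
    ((∀ m : ℕ, 1 ≤ m → n ≠ m * (3 * m - 1) / 2 ∧ n ≠ m * (3 * m + 1) / 2) →
      (pe n : ℤ) - po n = 0) := by
  rw [← coeff_pentagonalSeries_eq_pe_sub_po]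
  refine ⟨fun m _ hnm => ?_, fun H => coeff_pentagonalSeries_eq_zero ℤ ?_⟩
  · rcases hnm with rfl | rfl
    · rw [← pentagonal_natCast, coeff_pentagonalSeries_pentagonal, Int.cast_negOnePow_natCast]
    · rw [← pentagonal_neg_natCast, coeff_pentagonalSeries_pentagonal, Int.negOnePow_neg,
        Int.cast_negOnePow_natCast]
  · rintro ⟨k, hk⟩
    obtain ⟨m, rfl | rfl⟩ := Int.eq_nat_or_neg k
    · rw [pentagonal_natCast] at hk
      exact (H m (Nat.one_le_iff_ne_zero.2 (by rintro rfl; simp at hk; omega))).1 hk.symm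
    · rw [pentagonal_neg_natCast] at hk
      exact (H m (Nat.one_le_iff_ne_zero.2 (by rintro rfl; simp at hk; omega))).2 hk.symm
end

section
/- Euler's pentagonal number theorem: the formal power series product ∏_{n≥1} (1 - q^n) equals ∑_{m=-∞}^{∞} (-1)^m q^{m(3m-1)/2}. -/
/-!
This is Mathlib's pentagonal number theorem (`coeff_prod_one_sub_X_pow_eventually_eq`) once the
infinite product is truncated: a factor `1 - X ^ n` with `N < n` is `1` modulo `X ^ (N + 1)`, so
it does not affect the coefficient of `X ^ N`.
-/

open Finset PowerSeries

theorem PowerSeries.coeff_prod_one_sub_X_pow_add_one_of_range_subset {R : Type*} [CommRing R]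
    {N : ℕ} {s : Finset ℕ} (hs : range N ⊆ s) :
    coeff N (∏ n ∈ s, (1 - X ^ (n + 1) : R⟦X⟧)) =
      coeff N (∏ n ∈ range N, (1 - X ^ (n + 1) : R⟦X⟧)) := by
  nontriviality R
  rw [← prod_sdiff hs, mul_comm]
  refine coeff_mul_prod_one_sub_of_lt_order N _ _ _ fun n hn => ?_
  have hNn : N ≤ n := by simpa using (mem_sdiff.1 hn).2
  rw [order_X_pow]
  exact_mod_cast Nat.lt_succ_of_le hNn

theorem PowerSeries.prod_range_one_sub_X_pow_add_one {R : Type*} [CommRing R] (N : ℕ) :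
    ∏ n ∈ range N, (1 - X ^ (n + 1) : R⟦X⟧) = ∏ n ∈ Icc 1 N, (1 - X ^ n) := by
  rw [range_eq_Ico, prod_Ico_add' (fun n => (1 - X ^ n : R⟦X⟧)), zero_add,
    Ico_add_one_right_eq_Icc]

theorem PowerSeries.coeff_prod_Icc_one_sub_X_pow (R : Type*) [CommRing R] (N : ℕ) :
    coeff N (∏ n ∈ Icc 1 N, (1 - X ^ n : R⟦X⟧)) = coeff N (pentagonalSeries R) := by
  obtain ⟨s, hs⟩ := Filter.eventually_atTop.1 (coeff_prod_one_sub_X_pow_eventually_eq R N)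
  rw [← prod_range_one_sub_X_pow_add_one, ← coeff_prod_one_sub_X_pow_add_one_of_range_subset
    (subset_union_right (s₁ := s)), hs _ subset_union_left]

theorem natCast_eq_ediv_two_iff_pentagonal_eq (N : ℕ) (m : ℤ) :
    (N : ℤ) = m * (3 * m - 1) / 2 ↔ pentagonal m = N := by
  rw [← natCast_pentagonal, eq_comm]
  exact Int.natCast_inj

/-- Euler's pentagonal number theorem, stated coefficient-wise: the coefficient of `q^N`
in `∏_{n≥1} (1 - q^n)` (which equals that of the finite truncation `∏_{n=1}^{N} (1 - q^n)`)
is `(-1)^m` if `N = m(3m-1)/2` for some `m ∈ ℤ`, and `0` otherwise. -/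
theorem stmt_4 (N : ℕ) :
    (∀ m : ℤ, (N : ℤ) = m * (3 * m - 1) / 2 →
      PowerSeries.coeff (R := ℤ) N (∏ n ∈ Finset.Icc 1 N, (1 - PowerSeries.X ^ n)) =
        (-1) ^ m.natAbs) ∧
    ((¬ ∃ m : ℤ, (N : ℤ) = m * (3 * m - 1) / 2) →
      PowerSeries.coeff (R := ℤ) N (∏ n ∈ Finset.Icc 1 N, (1 - PowerSeries.X ^ n)) = 0) := by
  rw [coeff_prod_Icc_one_sub_X_pow]
  refine ⟨fun m hm => ?_, fun hN => coeff_pentagonalSeries_eq_zero ℤ ?_⟩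
  · rw [← (natCast_eq_ediv_two_iff_pentagonal_eq N m).1 hm, coeff_pentagonalSeries_pentagonal,
      Int.coe_negOnePow]
  · rintro ⟨m, hm⟩
    exact hN ⟨m, (natCast_eq_ediv_two_iff_pentagonal_eq N m).2 hm⟩
end

section
/- Let A = (a_1, …, a_k) be a finite sequence of positive integers and x a real number. For i with 1 ≤ i ≤ 2^k write i - 1 = ∑_{j ∈ S_i} 2^{j-1} in binary, and set b_i(x) = ∑_{j ∈ S_i} a_j^x and b_i = b_i(1). Define σ_x^{(A)}(n) = ∑_{j : a_j | n} a_j^x for n ≥ 1 (counting multiplicity in the sequence) and σ_x^{(A)}(n) = 0 for n ≤ 0. Then for all n ≥ 1: σ_x^{(A)}(n) = h_x^{(A)}(n) + ∑_{i=2}^{2^k} (-1)^{s(2i-1)} σ_x^{(A)}(n - b_i), where h_x^{(A)}(n) = ∑_{i ≥ 2, b_i = n} (-1)^{s(2i-1)} b_i(x) and s is the binary digit sum. -/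
/-!
Write `i = m + 1` with `m < 2 ^ k` and let `S ⊆ {0, …, k - 1}` be the set of binary digits of `m`,
so that `s(m) = #S`, `(-1) ^ s(2i - 1) = -(-1) ^ #S` and `b_i = ∑_{t ∈ S} a_{t+1}`. The identity
becomes `∑_S (-1) ^ #S (σ(n - b_S) + [b_S = n] b_S(x)) = 0`. Expanding `σ` as a sum over the
terms `a_{t+1}`, the contribution of a fixed `t` cancels between `S` and `S ∪ {t}` (for `t ∉ S`):
with `c = a_{t+1} > 0` and `v = n - b_S`, `[c ∣ v ∧ 0 < v] = [c ∣ v - c ∧ 0 < v - c] + [v = c]`.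
-/

/-- Binary digit sum: number of ones in the binary expansion of `n`. -/
def binDigitSum (n : ℕ) : ℕ := (Nat.digits 2 n).sum

/-- `b_i(x) = ∑_{j ∈ S_i} a_j^x` where `i - 1 = ∑_{j ∈ S_i} 2^{j-1}` is the binary
expansion of `i-1` (indices `1 ≤ j ≤ k`). -/
noncomputable def bAssoc (k : ℕ) (a : ℕ → ℕ) (x : ℝ) (i : ℕ) : ℝ :=
  ∑ j ∈ Finset.Icc 1 k, if (i - 1).testBit (j - 1) then (a j : ℝ) ^ x else 0

/-- `b_i = b_i(1) = ∑_{j ∈ S_i} a_j`. -/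
def bAssocNat (k : ℕ) (a : ℕ → ℕ) (i : ℕ) : ℕ :=
  ∑ j ∈ Finset.Icc 1 k, if (i - 1).testBit (j - 1) then a j else 0

/-- `σ_x^{(A)}(n) = ∑_{j : a_j ∣ n} a_j^x` for `n ≥ 1` (with multiplicity), `0` for `n ≤ 0`. -/
noncomputable def sigmaSeq (k : ℕ) (a : ℕ → ℕ) (x : ℝ) (n : ℤ) : ℝ :=
  if 0 < n then ∑ j ∈ Finset.Icc 1 k, (if (a j : ℤ) ∣ n then (a j : ℝ) ^ x else 0) else 0

open Finset

def divisorWeightSum {ι M : Type*} [AddCommMonoid M] (T : Finset ι) (c : ι → ℤ) (w : ι → M)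
    (v : ℤ) : M :=
  ∑ t ∈ T, if c t ∣ v ∧ 0 < v then w t else 0

lemma ite_dvd_and_pos_eq_ite_sub_add {R : Type*} [AddMonoidWithOne R] {c : ℤ} (hc : 0 < c) (v : ℤ) :
    (if c ∣ v ∧ 0 < v then (1 : R) else 0)
      = (if c ∣ v - c ∧ 0 < v - c then 1 else 0) + if v = c then 1 else 0 := by
  by_cases hv : v = c
  · subst hv; simp [hc]
  · have hiff : c ∣ v - c ∧ 0 < v - c ↔ c ∣ v ∧ 0 < v := by
      rw [dvd_sub_self_right]
      constructor
      · rintro ⟨hd, hp⟩; exact ⟨hd, by omega⟩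
      · rintro ⟨hd, hp⟩; exact ⟨hd, lt_of_le_of_ne (by linarith [Int.le_of_dvd hp hd]) (by omega)⟩
    rw [if_neg hv, add_zero, if_congr hiff rfl rfl]

section AlternatingSubsetSum

variable {ι R : Type*} [DecidableEq ι] [CommRing R]

lemma sum_powerset_neg_one_pow_card_mul_ite_dvd_and_pos {T : Finset ι} {t : ι} (ht : t ∈ T) (c : ι → ℤ)
    (hc : 0 < c t) (n : ℤ) :
    ∑ S ∈ T.powerset, (-1 : R) ^ #S *
      ((if c t ∣ n - ∑ s ∈ S, c s ∧ 0 < n - ∑ s ∈ S, c s then 1 else 0)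
        + if t ∈ S ∧ ∑ s ∈ S, c s = n then 1 else 0) = 0 := by
  rw [← insert_erase ht, sum_powerset_insert (notMem_erase t T), ← sum_add_distrib]
  refine sum_eq_zero fun S hS => ?_
  have htS : t ∉ S := fun h => notMem_erase t T (mem_powerset.mp hS h)
  have hsub : n - (c t + ∑ s ∈ S, c s) = (n - ∑ s ∈ S, c s) - c t := by ring
  rw [card_insert_of_notMem htS, sum_insert htS, hsub,
    ite_dvd_and_pos_eq_ite_sub_add (R := R) hc (n - ∑ s ∈ S, c s)]
  simp only [htS, false_and, if_false, mem_insert, true_or, true_and, pow_succ]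
  have heq : (c t + ∑ s ∈ S, c s = n) ↔ (n - ∑ s ∈ S, c s = c t) := by omega
  simp only [heq]
  ring

theorem sum_powerset_neg_one_pow_card_mul_divisorWeightSum (T : Finset ι) (c : ι → ℤ)
    (hc : ∀ t ∈ T, 0 < c t) (w : ι → R) (n : ℤ) :
    ∑ S ∈ T.powerset, (-1 : R) ^ #S *
      (divisorWeightSum T c w (n - ∑ s ∈ S, c s)
        + if ∑ s ∈ S, c s = n then ∑ s ∈ S, w s else 0) = 0 := by
  have hexpand : ∀ S ∈ T.powerset,
      (-1 : R) ^ #S * (divisorWeightSum T c w (n - ∑ s ∈ S, c s)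
        + if ∑ s ∈ S, c s = n then ∑ s ∈ S, w s else 0)
      = ∑ t ∈ T, w t * ((-1 : R) ^ #S *
          ((if c t ∣ n - ∑ s ∈ S, c s ∧ 0 < n - ∑ s ∈ S, c s then 1 else 0)
            + if t ∈ S ∧ ∑ s ∈ S, c s = n then 1 else 0)) := by
    intro S hS
    have hW : ∑ s ∈ S, w s = ∑ t ∈ T, if t ∈ S then w t else 0 := by
      rw [← sum_filter, filter_mem_eq_inter, inter_eq_right.mpr (mem_powerset.mp hS)]
    rw [divisorWeightSum, hW, ite_sum_zero, mul_add, mul_sum, mul_sum, ← sum_add_distrib]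
    refine sum_congr rfl fun t _ => ?_
    split_ifs <;> simp_all [mul_comm]
  rw [sum_congr rfl hexpand, sum_comm]
  refine sum_eq_zero fun t ht => ?_
  rw [← mul_sum, sum_powerset_neg_one_pow_card_mul_ite_dvd_and_pos ht c (hc t ht) n, mul_zero]

end AlternatingSubsetSum

lemma binDigitSum_eq_length_bitIndices (m : ℕ) : binDigitSum m = m.bitIndices.length := by
  induction m using Nat.binaryRec with
  | zero => simp [binDigitSum]
  | bit b m ih =>
    rcases Nat.eq_zero_or_pos (Nat.bit b m) with h0 | hpos
    · simp [h0, binDigitSum]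
    · rw [binDigitSum, Nat.digits_def' one_lt_two hpos, List.sum_cons, Nat.bit_div_two,
        ← binDigitSum, ih, Nat.bit_mod_two]
      cases b
      · rw [Nat.bitIndices_bit_false]; simp
      · rw [Nat.bitIndices_bit_true]; simp [add_comm]

lemma binDigitSum_two_mul_add_one (m : ℕ) : binDigitSum (2 * m + 1) = binDigitSum m + 1 := by
  simp [binDigitSum_eq_length_bitIndices]

lemma neg_one_pow_binDigitSum_two_mul_sub_one {R : Type*} [Ring R] {i : ℕ} (hi : 1 ≤ i) :
    (-1 : R) ^ binDigitSum (2 * i - 1) = -(-1) ^ binDigitSum (i - 1) := by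
  obtain ⟨m, rfl⟩ := Nat.exists_eq_add_of_le hi
  rw [show 2 * (1 + m) - 1 = 2 * m + 1 by omega, binDigitSum_two_mul_add_one, pow_succ,
    Nat.add_sub_cancel_left, mul_neg_one]

lemma bitIndices_subset_range_iff {k m : ℕ} : m.bitIndices.toFinset ⊆ range k ↔ m < 2 ^ k := by
  constructor
  · intro h
    refine Nat.lt_pow_two_of_testBit m fun i hi => ?_
    by_contra hbit
    have := h (List.mem_toFinset.mpr (Nat.mem_bitIndices.mpr (by simpa using hbit)))
    simp at this
    omega
  · intro hm t ht
    have h2 := Nat.two_pow_le_of_mem_bitIndices (List.mem_toFinset.mp ht)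
    simp only [mem_range]
    by_contra h
    have := Nat.pow_le_pow_right two_pos (not_lt.mp h)
    omega

lemma sum_Icc_one_eq_sum_range {M : Type*} [AddCommMonoid M] (k : ℕ) (f : ℕ → M) :
    ∑ j ∈ Icc 1 k, f j = ∑ t ∈ range k, f (t + 1) := by
  rw [← Ico_add_one_right_eq_Icc, sum_Ico_eq_sum_range]
  simp [add_comm]

lemma sum_Icc_testBit_eq_sum_bitIndices {M : Type*} [AddCommMonoid M] {k m : ℕ} (hm : m < 2 ^ k)
    (f : ℕ → M) :
    ∑ j ∈ Icc 1 k, (if m.testBit (j - 1) then f j else 0)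
      = ∑ t ∈ m.bitIndices.toFinset, f (t + 1) := by
  rw [sum_Icc_one_eq_sum_range, ← inter_eq_right.mpr (bitIndices_subset_range_iff.mpr hm),
    ← filter_mem_eq_inter, sum_filter]
  simp

lemma sigmaSeq_eq_sum_range (k : ℕ) (a : ℕ → ℕ) (x : ℝ) (v : ℤ) :
    sigmaSeq k a x v
      = divisorWeightSum (range k) (fun t => (a (t + 1) : ℤ)) (fun t => (a (t + 1) : ℝ) ^ x) v := by
  rw [sigmaSeq, divisorWeightSum, sum_Icc_one_eq_sum_range]
  split_ifs with hv <;> simp [hv]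

lemma sum_range_two_pow_neg_one_pow_mul_sigmaSeq (k : ℕ) (a : ℕ → ℕ)
    (hpos : ∀ j, 1 ≤ j → j ≤ k → 0 < a j) (x : ℝ) (n : ℤ) :
    ∑ m ∈ range (2 ^ k), (-1 : ℝ) ^ binDigitSum m *
      (sigmaSeq k a x (n - bAssocNat k a (m + 1))
        + if (bAssocNat k a (m + 1) : ℤ) = n then bAssoc k a x (m + 1) else 0) = 0 := by
  set c : ℕ → ℤ := fun t => a (t + 1)
  set w : ℕ → ℝ := fun t => (a (t + 1) : ℝ) ^ x
  have hc : ∀ t ∈ range k, 0 < c t := fun t ht => by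
    simpa [c] using hpos (t + 1) (by omega) (by simpa using ht)
  refine Eq.trans ?_ (sum_powerset_neg_one_pow_card_mul_divisorWeightSum (range k) c hc w n)
  refine sum_equiv equivBitIndices (fun m => ?_) fun m hm => ?_
  · simp [bitIndices_subset_range_iff]
  · have hm : m < 2 ^ k := mem_range.mp hm
    have hN : (bAssocNat k a (m + 1) : ℤ) = ∑ s ∈ m.bitIndices.toFinset, c s := by
      rw [bAssocNat, Nat.add_sub_cancel, sum_Icc_testBit_eq_sum_bitIndices hm]
      push_cast
      rfl
    have hB : bAssoc k a x (m + 1) = ∑ s ∈ m.bitIndices.toFinset, w s := by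
      rw [bAssoc, Nat.add_sub_cancel, sum_Icc_testBit_eq_sum_bitIndices hm]
    rw [equivBitIndices_apply, binDigitSum_eq_length_bitIndices,
      ← List.toFinset_card_of_nodup Nat.bitIndices_nodup, hN, hB, sigmaSeq_eq_sum_range]

theorem stmt_8_general (k : ℕ) (a : ℕ → ℕ)
    (hpos : ∀ j, 1 ≤ j → j ≤ k → 0 < a j) (x : ℝ) (n : ℕ) :
    sigmaSeq k a x n =
      (∑ i ∈ Finset.Icc 2 (2 ^ k),
        if bAssocNat k a i = n then (-1 : ℝ) ^ binDigitSum (2 * i - 1) * bAssoc k a x i else 0)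
      + ∑ i ∈ Finset.Icc 2 (2 ^ k),
          (-1 : ℝ) ^ binDigitSum (2 * i - 1) *
            sigmaSeq k a x ((n : ℤ) - (bAssocNat k a i : ℤ)) := by
  have h := sum_range_two_pow_neg_one_pow_mul_sigmaSeq k a hpos x n
  obtain ⟨M, hM⟩ : ∃ M, 2 ^ k = M + 1 := ⟨2 ^ k - 1, (Nat.succ_pred_eq_of_pos (by positivity)).symm⟩
  rw [hM, sum_range_succ'] at h
  have hempty : (-1 : ℝ) ^ binDigitSum 0 * (sigmaSeq k a x (n - bAssocNat k a (0 + 1))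
      + if (bAssocNat k a (0 + 1) : ℤ) = n then bAssoc k a x (0 + 1) else 0) = sigmaSeq k a x n := by
    simp [bAssocNat, bAssoc, binDigitSum]
  have hsign : ∀ m, (-1 : ℝ) ^ binDigitSum (2 * (2 + m) - 1) = -(-1) ^ binDigitSum (m + 1) :=
    fun m => by rw [neg_one_pow_binDigitSum_two_mul_sub_one (by omega), show 2 + m - 1 = m + 1 by omega]
  rw [hempty] at h
  rw [hM, ← Ico_add_one_right_eq_Icc, sum_Ico_eq_sum_range, sum_Ico_eq_sum_range,
    show M + 1 + 1 - 2 = M by omega, ← sum_add_distrib]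
  rw [sum_congr rfl fun m _ => ?_, sum_neg_distrib]
  · linarith
  rw [hsign, show 2 + m = m + 1 + 1 by omega]
  simp only [Nat.cast_inj]
  split_ifs <;> ring

/-- Theorem 1: `σ_x^{(A)}(n) = h_x^{(A)}(n) + ∑_{i=2}^{2^k} (-1)^{s(2i-1)} σ_x^{(A)}(n - b_i)`
where `h_x^{(A)}(n) = ∑_{i ≥ 2, b_i = n} (-1)^{s(2i-1)} b_i(x)`. -/
theorem stmt_8 (k : ℕ) (hk : 1 ≤ k) (a : ℕ → ℕ)
    (hpos : ∀ j, 1 ≤ j → j ≤ k → 0 < a j) (x : ℝ) (n : ℕ) (hn : 1 ≤ n) :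
    sigmaSeq k a x n =
      (∑ i ∈ Finset.Icc 2 (2 ^ k),
        if bAssocNat k a i = n then (-1 : ℝ) ^ binDigitSum (2 * i - 1) * bAssoc k a x i else 0)
      + ∑ i ∈ Finset.Icc 2 (2 ^ k),
          (-1 : ℝ) ^ binDigitSum (2 * i - 1) *
            sigmaSeq k a x ((n : ℤ) - (bAssocNat k a i : ℤ)) :=
  stmt_8_general k a hpos x n
end
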